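/- Let ν ∈ (−1,∞)^d and suppose the semigroup kernels T_t(x,y) on ((0,∞)^d, μ_ν) satisfy the upper Gaussian bound 0 ≤ T_t(x,y) ≤ C μ_ν(B(x,√t))^{-1} exp(−|x−y|²/(ct)) for x ∈ N(Q), y ∈ Q*, for cuboids Q of an admissible covering 𝒬. Then sup_{y ∈ Q*} ∫_{Q**} sup_{t > d_Q²} T_t(x,y) dμ_ν(x) ≤ C' for all Q ∈ 𝒬, with C' independent of Q. -/

import Mathlib

open MeasureTheory Set

/-- The measure on the positive orthant of `ℝ^d` with density `∏ x_i^(2ν_i+1) dx`. -/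
noncomputable def besselMeasureD (d : ℕ) (ν : Fin d → ℝ) :
    Measure (EuclideanSpace ℝ (Fin d)) :=
  (volume.restrict {x : EuclideanSpace ℝ (Fin d) | ∀ i, 0 < x i}).withDensity
    fun x => ENNReal.ofReal (∏ i, (x i) ^ (2 * ν i + 1))

/-- The cuboid with center `z` and axial radii `r`. -/
def cuboid (d : ℕ) (z r : Fin d → ℝ) : Set (EuclideanSpace ℝ (Fin d)) :=
  {x | ∀ i, |x i - z i| ≤ r i}

/-- The Euclidean diameter of a cuboid with axial radii `r`. -/
noncomputable def cuboidDiam (d : ℕ) (r : Fin d → ℝ) : ℝ :=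
  2 * Real.sqrt (∑ i, (r i) ^ 2)

open scoped ENNReal

/-! For `t > d_Q²` the Gaussian factor is at most `1`, so the integrand is at most
`C / μ_ν(B(x, √t))`, and it suffices to show `μ_ν(Q**) ≤ A · μ_ν(B(x, ρ))` for `x ∈ Q**`,
`ρ > d_Q`, with `A` independent of `Q`; integrating over `Q**` then gives `C · A`.
The ball contains a cube around `x` whose side is comparable to every side of `Q**`, and
`μ_ν` is the product of the measures `t^(2ν_i+1) dt` on `(0, ∞)`. So everything reduces to
intervals, where `∫_{[a-s, a+s] ∩ (0,∞)} t^p dt ≍ s (a + s)^p` for `a ≥ 0` and `p > -1`. -/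

theorem lintegral_fin_nat_prod_eq_prod {n : ℕ} {E : Type*} [MeasurableSpace E]
    {μ : Fin n → Measure E} [∀ i, SigmaFinite (μ i)] {f : Fin n → E → ℝ≥0∞}
    (hf : ∀ i, Measurable (f i)) :
    ∫⁻ x : Fin n → E, ∏ i, f i (x i) ∂(Measure.pi μ) = ∏ i, ∫⁻ x, f i x ∂(μ i) := by
  induction n with
  | zero => simp
  | succ n ih =>
      calc
        _ = ∫⁻ x : E × (Fin n → E), f 0 x.1 * ∏ i : Fin n, f i.succ (x.2 i)
            ∂((μ 0).prod (Measure.pi fun i ↦ μ i.succ)) := by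
          rw [← ((measurePreserving_piFinSuccAbove μ 0).symm).lintegral_comp_emb
            (MeasurableEquiv.measurableEmbedding _)]
          simp_rw [MeasurableEquiv.piFinSuccAbove_symm_apply, Fin.insertNthEquiv,
            Fin.prod_univ_succ, Fin.insertNth_zero, Equiv.coe_fn_mk, Fin.cons_succ,
            Fin.zero_succAbove, cast_eq, Fin.cons_zero]
        _ = (∫⁻ x, f 0 x ∂μ 0) * ∏ i : Fin n, ∫⁻ x, f i.succ x ∂(μ i.succ) := by
          rw [← ih fun i => hf i.succ, lintegral_prod_mul (hf 0).aemeasurable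
            (g := fun y : Fin n → E => ∏ i, f i.succ (y i))
            (Finset.measurable_prod _ fun i _ =>
              (hf i.succ).comp (measurable_pi_apply i)).aemeasurable]
        _ = ∏ i, ∫⁻ x, f i x ∂(μ i) := by rw [Fin.prod_univ_succ]

lemma rpow_le_rpow_abs_mul_rpow {u v K : ℝ} (p : ℝ) (hu : 0 < u) (hv : 0 < v)
    (huv : u ≤ K * v) (hvu : v ≤ K * u) : u ^ p ≤ K ^ |p| * v ^ p := by
  have hK : 0 < K := pos_of_mul_pos_left (hu.trans_le huv) hv.le
  rcases le_or_gt 0 p with hp | hp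
  · rw [abs_of_nonneg hp, ← Real.mul_rpow hK.le hv.le]
    exact Real.rpow_le_rpow hu.le huv hp
  · calc u ^ p ≤ (v / K) ^ p :=
          Real.rpow_le_rpow_of_nonpos (by positivity) ((div_le_iff₀' hK).2 hvu) hp.le
      _ = K ^ |p| * v ^ p := by
          rw [abs_of_neg hp, Real.div_rpow hv.le hK.le, Real.rpow_neg hK.le]; ring

lemma lintegral_Ioc_zero_rpow {p : ℝ} (hp : -1 < p) {b : ℝ} (hb : 0 ≤ b) :
    ∫⁻ t in Ioc 0 b, ENNReal.ofReal (t ^ p) = ENNReal.ofReal (b ^ (p + 1) / (p + 1)) := by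
  have hint : IntegrableOn (fun t : ℝ => t ^ p) (Ioc 0 b) :=
    (intervalIntegrable_iff_integrableOn_Ioc_of_le hb).1
      (intervalIntegral.intervalIntegrable_rpow' hp)
  rw [← ofReal_integral_eq_lintegral_ofReal hint
    ((ae_restrict_mem measurableSet_Ioc).mono fun t ht => Real.rpow_nonneg ht.1.le _),
    ← intervalIntegral.integral_of_le hb, integral_rpow (Or.inl hp),
    Real.zero_rpow (by linarith), sub_zero]

noncomputable def powerMeasure (p : ℝ) : Measure ℝ :=
  (volume.restrict (Ioi 0)).withDensity fun t => ENNReal.ofReal (t ^ p)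

lemma powerMeasure_apply (p : ℝ) {s : Set ℝ} (hs : MeasurableSet s) :
    powerMeasure p s = ∫⁻ t in s ∩ Ioi 0, ENNReal.ofReal (t ^ p) := by
  rw [powerMeasure, withDensity_apply _ hs, Measure.restrict_restrict hs]

lemma powerMeasure_Icc_le {p : ℝ} (hp : -1 < p) {a s : ℝ} (ha : 0 ≤ a) (hs : 0 < s) :
    powerMeasure p (Icc (a - s) (a + s)) ≤
      ENNReal.ofReal (max (2 * 2 ^ |p|) (4 / (p + 1)) * s * (a + s) ^ p) := by
  have has : 0 < a + s := by linarith
  rw [powerMeasure_apply p measurableSet_Icc]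
  rcases le_or_gt (3 * s) a with hfar | hnear
  · calc ∫⁻ t in Icc (a - s) (a + s) ∩ Ioi 0, ENNReal.ofReal (t ^ p)
        ≤ ∫⁻ _ in Icc (a - s) (a + s), ENNReal.ofReal (2 ^ |p| * (a + s) ^ p) := by
          refine (setLIntegral_mono measurable_const fun t ht => ?_).trans
            (lintegral_mono_set inter_subset_left)
          exact ENNReal.ofReal_le_ofReal (rpow_le_rpow_abs_mul_rpow p ht.2 has
            (by linarith [ht.1.2]) (by linarith [ht.1.1]))
      _ = ENNReal.ofReal (2 * 2 ^ |p| * s * (a + s) ^ p) := by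
          rw [setLIntegral_const, Real.volume_Icc, ← ENNReal.ofReal_mul (by positivity)]
          congr 1; ring
      _ ≤ _ := by gcongr; exact le_max_left _ _
  · calc ∫⁻ t in Icc (a - s) (a + s) ∩ Ioi 0, ENNReal.ofReal (t ^ p)
        ≤ ∫⁻ t in Ioc 0 (a + s), ENNReal.ofReal (t ^ p) :=
          lintegral_mono_set fun t ht => ⟨ht.2, ht.1.2⟩
      _ = ENNReal.ofReal ((a + s) / (p + 1) * (a + s) ^ p) := by
          rw [lintegral_Ioc_zero_rpow hp has.le, Real.rpow_add_one has.ne']; ring_nf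
      _ ≤ _ := by
          gcongr
          calc (a + s) / (p + 1) ≤ 4 / (p + 1) * s := by
                rw [div_mul_eq_mul_div]
                exact div_le_div_of_nonneg_right (by linarith) (by linarith)
            _ ≤ _ := by gcongr; exact le_max_right _ _

lemma le_powerMeasure_Icc (p : ℝ) {a s : ℝ} (ha : 0 ≤ a) (hs : 0 < s) :
    ENNReal.ofReal (s * (a + s) ^ p / (2 * 2 ^ |p|)) ≤ powerMeasure p (Icc (a - s) (a + s)) := by
  have has : 0 < a + s := by linarith
  rw [powerMeasure_apply p measurableSet_Icc]
  calc ENNReal.ofReal (s * (a + s) ^ p / (2 * 2 ^ |p|))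
      = ∫⁻ _ in Icc (a + s / 2) (a + s), ENNReal.ofReal ((a + s) ^ p / 2 ^ |p|) := by
        rw [setLIntegral_const, Real.volume_Icc, ← ENNReal.ofReal_mul (by positivity)]
        congr 1; ring
    _ ≤ ∫⁻ t in Icc (a + s / 2) (a + s), ENNReal.ofReal (t ^ p) := by
        refine setLIntegral_mono (by fun_prop) fun t ⟨ht₁, ht₂⟩ => ENNReal.ofReal_le_ofReal ?_
        rw [div_le_iff₀' (by positivity)]
        exact rpow_le_rpow_abs_mul_rpow p has (by linarith) (by linarith) (by linarith)
    _ ≤ ∫⁻ t in Icc (a - s) (a + s) ∩ Ioi 0, ENNReal.ofReal (t ^ p) :=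
        lintegral_mono_set fun t ⟨ht₁, ht₂⟩ => ⟨⟨by linarith, ht₂⟩, mem_Ioi.2 (by linarith)⟩

lemma exists_powerMeasure_Icc_le_mul {p : ℝ} (hp : -1 < p) {δ Δ : ℝ} (hδ : 0 < δ) (hΔ : 0 ≤ Δ) :
    ∃ A > 0, ∀ z R x s : ℝ, 0 ≤ z → 0 < R → x ∈ Icc (z - R) (z + R) → 0 ≤ x →
      δ * R ≤ s → s ≤ Δ * R →
      powerMeasure p (Icc (z - R) (z + R)) ≤
        ENNReal.ofReal A * powerMeasure p (Icc (x - s) (x + s)) := by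
  set U := max (2 * 2 ^ |p|) (4 / (p + 1))
  set K := 1 + Δ + 2 / δ
  have hU : 0 < U := lt_max_of_lt_left (by positivity)
  have hK : 0 < K := by positivity
  refine ⟨U * K ^ |p| / δ * (2 * 2 ^ |p|), by positivity, ?_⟩
  intro z R x s hz hR ⟨hx₁, hx₂⟩ hx hδs hsΔ
  have hs : 0 < s := (mul_pos hδ hR).trans_le hδs
  have hRs : R ≤ s / δ := (le_div_iff₀' hδ).2 hδs
  have hcomp : (z + R) ^ p ≤ K ^ |p| * (x + s) ^ p := by
    refine rpow_le_rpow_abs_mul_rpow p (by linarith) (by linarith) ?_ ?_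
    · have : 2 / δ * s = 2 * (s / δ) := by ring
      nlinarith [mul_nonneg hΔ (by linarith : 0 ≤ x + s),
        mul_nonneg (by positivity : 0 ≤ 2 / δ) hx]
    · nlinarith [mul_nonneg hΔ (by linarith : 0 ≤ z + R),
        mul_nonneg (by positivity : 0 ≤ 2 / δ) (by linarith : 0 ≤ z + R)]
  calc powerMeasure p (Icc (z - R) (z + R))
      ≤ ENNReal.ofReal (U * R * (z + R) ^ p) := powerMeasure_Icc_le hp hz hR
    _ ≤ ENNReal.ofReal (U * K ^ |p| / δ * (2 * 2 ^ |p|) * (s * (x + s) ^ p / (2 * 2 ^ |p|))) := by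
        refine ENNReal.ofReal_le_ofReal ?_
        calc U * R * (z + R) ^ p ≤ U * (s / δ) * (K ^ |p| * (x + s) ^ p) := by gcongr
          _ = _ := by field_simp
    _ ≤ ENNReal.ofReal (U * K ^ |p| / δ * (2 * 2 ^ |p|)) *
          powerMeasure p (Icc (x - s) (x + s)) := by
        rw [ENNReal.ofReal_mul (by positivity)]
        gcongr
        exact le_powerMeasure_Icc p hx hs

lemma cuboid_eq_preimage_pi (d : ℕ) (z r : Fin d → ℝ) :
    cuboid d z r = WithLp.ofLp ⁻¹' univ.pi fun i => Icc (z i - r i) (z i + r i) := by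
  ext x
  simp only [cuboid, abs_le, mem_ofPred_eq, mem_preimage, mem_univ_pi, mem_Icc]
  exact forall_congr' fun i => by constructor <;> intro h <;> constructor <;> linarith [h.1, h.2]

lemma measurableSet_cuboid (d : ℕ) (z r : Fin d → ℝ) : MeasurableSet (cuboid d z r) := by
  rw [cuboid_eq_preimage_pi]
  exact (MeasurableSet.univ_pi fun _ => measurableSet_Icc).preimage (by fun_prop)

lemma orthant_eq_preimage_pi (d : ℕ) :
    {x : EuclideanSpace ℝ (Fin d) | ∀ i, 0 < x i} = WithLp.ofLp ⁻¹' univ.pi fun _ => Ioi 0 := by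
  ext x; simp

lemma besselMeasureD_cuboid (d : ℕ) (ν : Fin d → ℝ) (z ρ : Fin d → ℝ) :
    besselMeasureD d ν (cuboid d z ρ) =
      ∏ i, powerMeasure (2 * ν i + 1) (Icc (z i - ρ i) (z i + ρ i)) := by
  set S : Fin d → Set ℝ := fun i => Icc (z i - ρ i) (z i + ρ i) ∩ Ioi 0
  have hS : MeasurableSet (univ.pi S) :=
    MeasurableSet.univ_pi fun _ => measurableSet_Icc.inter measurableSet_Ioi
  have horthant : cuboid d z ρ ∩ {x | ∀ i, 0 < x i} = WithLp.ofLp ⁻¹' univ.pi S := by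
    rw [cuboid_eq_preimage_pi, pi_inter_distrib, preimage_inter]
    congr 1
    ext x
    simp

  rw [besselMeasureD, withDensity_apply _ (measurableSet_cuboid d z ρ),
    Measure.restrict_restrict (measurableSet_cuboid d z ρ), horthant,
    (PiLp.volume_preserving_ofLp (Fin d)).setLIntegral_comp_preimage_emb
      (MeasurableEquiv.toLp 2 (Fin d → ℝ)).symm.measurableEmbedding
      (fun y => ENNReal.ofReal (∏ i, y i ^ (2 * ν i + 1))),
    setLIntegral_congr_fun hS (g := fun y => ∏ i, ENNReal.ofReal (y i ^ (2 * ν i + 1)))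
      fun y hy => ENNReal.ofReal_prod_of_nonneg fun i _ => Real.rpow_nonneg (hy i trivial).2.le _,
    volume_pi, Measure.restrict_pi_pi,
    lintegral_fin_nat_prod_eq_prod (f := fun i t => ENNReal.ofReal (t ^ (2 * ν i + 1)))
      fun i => by fun_prop]
  exact Finset.prod_congr rfl fun i _ => (powerMeasure_apply _ measurableSet_Icc).symm

lemma ae_besselMeasureD_nonneg (d : ℕ) (ν : Fin d → ℝ) :
    ∀ᵐ x ∂besselMeasureD d ν, ∀ i, 0 ≤ x i := by
  have hP : MeasurableSet {x : EuclideanSpace ℝ (Fin d) | ∀ i, 0 < x i} := by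
    rw [orthant_eq_preimage_pi]
    exact (MeasurableSet.univ_pi fun _ => measurableSet_Ioi).preimage (by fun_prop)
  have hae : ∀ᵐ x ∂besselMeasureD d ν, x ∈ {x : EuclideanSpace ℝ (Fin d) | ∀ i, 0 < x i} :=
    (withDensity_absolutelyContinuous _ _).ae_le (ae_restrict_mem hP)
  exact hae.mono fun x hx i => (hx i).le

lemma exists_besselMeasureD_cuboid_le_mul {d : ℕ} {ν : Fin d → ℝ} (hν : ∀ i, -1 < ν i)
    {δ Δ : ℝ} (hδ : 0 < δ) (hΔ : 0 ≤ Δ) :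
    ∃ A > 0, ∀ (z R : Fin d → ℝ) (x : EuclideanSpace ℝ (Fin d)) (s : ℝ),
      (∀ i, 0 ≤ z i) → (∀ i, 0 < R i) → x ∈ cuboid d z R → (∀ i, 0 ≤ x i) →
      (∀ i, δ * R i ≤ s ∧ s ≤ Δ * R i) →
      besselMeasureD d ν (cuboid d z R) ≤
        ENNReal.ofReal A * besselMeasureD d ν (cuboid d x fun _ => s) := by
  choose A hA hdoubling using fun i =>
    exists_powerMeasure_Icc_le_mul (by linarith [hν i] : -1 < 2 * ν i + 1) hδ hΔ
  refine ⟨∏ i, A i, Finset.prod_pos fun i _ => hA i, fun z R x s hz hR hx hx0 hs => ?_⟩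
  rw [besselMeasureD_cuboid, besselMeasureD_cuboid,
    ENNReal.ofReal_prod_of_nonneg fun i _ => (hA i).le, ← Finset.prod_mul_distrib]
  refine Finset.prod_le_prod' fun i _ =>
    hdoubling i _ _ _ _ (hz i) (hR i) ?_ (hx0 i) (hs i).1 (hs i).2
  obtain ⟨hx₁, hx₂⟩ := abs_le.1 (hx i)
  exact ⟨by linarith, by linarith⟩

lemma sqrt_sum_sq_le_sqrt_card_mul {d : ℕ} {R : Fin d → ℝ} {M : ℝ} (hM : 0 ≤ M)
    (hR : ∀ i, |R i| ≤ M) : √(∑ i, R i ^ 2) ≤ √d * M := by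
  rw [← Real.sqrt_sq hM, ← Real.sqrt_mul (Nat.cast_nonneg d)]
  refine Real.sqrt_le_sqrt ?_
  simpa using Finset.sum_le_card_nsmul Finset.univ (fun i => R i ^ 2) (M ^ 2) fun i _ =>
    sq_le_sq' (abs_le.1 (hR i)).1 (abs_le.1 (hR i)).2

lemma cuboid_subset_ball {d : ℕ} (x : EuclideanSpace ℝ (Fin d)) {s ρ : ℝ} (hs : 0 ≤ s)
    (h : √d * s < ρ) : cuboid d x (fun _ => s) ⊆ Metric.ball x ρ := fun y hy =>
  (EuclideanSpace.dist_eq y x).trans_le (sqrt_sum_sq_le_sqrt_card_mul hs fun i => by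
    rw [Real.dist_eq, abs_abs]; exact hy i) |>.trans_lt h

lemma cuboidDiam_const_mul (d : ℕ) {a : ℝ} (ha : 0 ≤ a) (r : Fin d → ℝ) :
    cuboidDiam d (fun i => a * r i) = a * cuboidDiam d r := by
  simp only [cuboidDiam, mul_pow, ← Finset.mul_sum, Real.sqrt_mul (sq_nonneg a), Real.sqrt_sq ha]
  ring

lemma exists_besselMeasureD_cuboid_le_mul_ball {d : ℕ} {ν : Fin d → ℝ} (hν : ∀ i, -1 < ν i)
    {C₁ θ : ℝ} (hC₁ : 0 ≤ C₁) (hθ : 0 < θ) :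
    ∃ A > 0, ∀ (z R : Fin d → ℝ) (x : EuclideanSpace ℝ (Fin d)) (ρ : ℝ),
      (∀ i, 0 ≤ z i) → (∀ i, 0 < R i) → (∀ i j, R i ≤ C₁ * R j) →
      x ∈ cuboid d z R → (∀ i, 0 ≤ x i) → θ * cuboidDiam d R < ρ →
      besselMeasureD d ν (cuboid d z R) ≤
        ENNReal.ofReal A * besselMeasureD d ν (Metric.ball x ρ) := by
  -- `√d + 1` rather than `√d`, so that `δ > 0` also when `d = 0`
  obtain ⟨A, hA, hdoubling⟩ := exists_besselMeasureD_cuboid_le_mul hν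
    (δ := θ / (√d + 1)) (Δ := θ * C₁) (by positivity) (by positivity)
  refine ⟨A, hA, fun z R x ρ hz hR hRR hx hx0 hρ => ?_⟩
  set L := √(∑ i, R i ^ 2)
  have hL : 0 ≤ L := Real.sqrt_nonneg _
  have hd : 0 < √d + 1 := by positivity
  set s := θ * L / (√d + 1)
  have hsρ : √d * s < ρ := by
    have : √d * s ≤ θ * L := by
      rw [mul_div_assoc', div_le_iff₀ hd]; nlinarith [mul_nonneg hθ.le hL]
    rw [cuboidDiam] at hρ
    nlinarith [mul_nonneg hθ.le hL]
  have hs : ∀ i, θ / (√d + 1) * R i ≤ s ∧ s ≤ θ * C₁ * R i := by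
    intro i
    have hRL : R i ≤ L := (le_abs_self _).trans (Real.abs_le_sqrt
      (Finset.single_le_sum (f := fun j => R j ^ 2) (fun j _ => sq_nonneg _) (Finset.mem_univ i)))
    have hLR : L ≤ √d * (C₁ * R i) := sqrt_sum_sq_le_sqrt_card_mul (by nlinarith [hR i])
      fun j => (abs_of_pos (hR j)).trans_le (hRR j i)
    constructor
    · rw [div_mul_eq_mul_div]
      exact div_le_div_of_nonneg_right (mul_le_mul_of_nonneg_left hRL hθ.le) hd.le
    · rw [div_le_iff₀ hd]
      nlinarith [mul_nonneg hθ.le (mul_nonneg hC₁ (hR i).le), Real.sqrt_nonneg d]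
  calc besselMeasureD d ν (cuboid d z R)
      ≤ ENNReal.ofReal A * besselMeasureD d ν (cuboid d x fun _ => s) :=
        hdoubling z R x s hz hR hx hx0 hs
    _ ≤ ENNReal.ofReal A * besselMeasureD d ν (Metric.ball x ρ) := by
        gcongr; exact cuboid_subset_ball x (by positivity) hsρ

lemma ENNReal.ofReal_le_div_of_le_mul_toReal_inv_mul {a C E : ℝ} {m : ℝ≥0∞} (hC : 0 ≤ C)
    (hE : E ≤ 1) (h : a ≤ C * m.toReal⁻¹ * E) : ENNReal.ofReal a ≤ ENNReal.ofReal C / m := by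
  refine (ENNReal.ofReal_le_ofReal (h.trans (mul_le_of_le_one_right (by positivity) hE))).trans ?_
  rw [← ENNReal.toReal_inv, ENNReal.ofReal_mul hC, div_eq_mul_inv]
  gcongr
  exact ENNReal.ofReal_toReal_le

lemma ENNReal.div_le_mul_div_of_le_mul {a b c q : ℝ≥0∞} (ha₀ : a ≠ 0) (ha : a ≠ ⊤)
    (h : q ≤ a * b) : c / b ≤ c * a / q := by
  rw [← ENNReal.mul_div_mul_right c b ha₀ ha, mul_comm b]
  exact ENNReal.div_le_div_left h _

theorem lintegral_sup_large_time_bound (d : ℕ) (ν : Fin d → ℝ) (hν : ∀ i, -1 < ν i)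
    (C c C₁ κ : ℝ) (hC : 0 < C) (hc : 0 < c) (hC₁ : 1 ≤ C₁) (hκ : 1 < κ) :
    ∃ C' : ℝ, 0 < C' ∧
      ∀ (T : ℝ → EuclideanSpace ℝ (Fin d) → EuclideanSpace ℝ (Fin d) → ℝ)
        (z r : Fin d → ℝ),
        (∀ i, 0 < r i) → (∀ i, 0 ≤ z i - r i) → (∀ i j, r i ≤ C₁ * r j) →
        (∀ t : ℝ, 0 < t → ∀ x ∈ cuboid d z (fun i => κ^2 * r i),
          ∀ y ∈ cuboid d z (fun i => κ * r i),
            0 ≤ T t x y ∧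
            T t x y ≤ C * (besselMeasureD d ν (Metric.ball x (Real.sqrt t))).toReal⁻¹ *
              Real.exp (-(dist x y)^2 / (c * t))) →
        ∀ y ∈ cuboid d z (fun i => κ * r i),
          (∫⁻ x in cuboid d z (fun i => κ^2 * r i),
              ⨆ (t : ℝ) (_ : (cuboidDiam d r)^2 < t), ENNReal.ofReal (T t x y)
            ∂(besselMeasureD d ν))
          ≤ ENNReal.ofReal C' := by
  have hκ₀ : 0 < κ ^ 2 := pow_pos (by linarith) 2
  obtain ⟨A, hA, hdoubling⟩ := exists_besselMeasureD_cuboid_le_mul_ball hν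
    (by linarith : 0 ≤ C₁) (inv_pos.2 hκ₀)
  refine ⟨C * A, by positivity, fun T z r hr hzr hrr hT y hy => ?_⟩
  set μ := besselMeasureD d ν
  set Q := cuboid d z fun i => κ ^ 2 * r i
  have hsup : ∀ᵐ x ∂μ.restrict Q, ⨆ (t : ℝ) (_ : cuboidDiam d r ^ 2 < t),
      ENNReal.ofReal (T t x y) ≤ ENNReal.ofReal C * ENNReal.ofReal A / μ Q := by
    filter_upwards [ae_restrict_mem (measurableSet_cuboid d z _),
      ae_restrict_of_ae (ae_besselMeasureD_nonneg d ν)] with x hxQ hx0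
    refine iSup₂_le fun t ht => ?_
    have ht₀ : 0 < t := (sq_nonneg _).trans_lt ht
    have hQ : μ Q ≤ ENNReal.ofReal A * μ (Metric.ball x √t) := by
      refine hdoubling z _ x _ (fun i => by linarith [hzr i, hr i]) (fun i => mul_pos hκ₀ (hr i))
        (fun i j => (mul_le_mul_of_nonneg_left (hrr i j) hκ₀.le).trans_eq (mul_left_comm _ _ _))
        hxQ hx0 ?_
      rw [cuboidDiam_const_mul d hκ₀.le, inv_mul_cancel_left₀ hκ₀.ne']
      exact Real.lt_sqrt_of_sq_lt ht
    have hgauss : Real.exp (-dist x y ^ 2 / (c * t)) ≤ 1 := Real.exp_le_one_iff.2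
      (div_nonpos_of_nonpos_of_nonneg (neg_nonpos.2 (sq_nonneg _)) (by positivity))
    calc ENNReal.ofReal (T t x y) ≤ ENNReal.ofReal C / μ (Metric.ball x √t) :=
          ENNReal.ofReal_le_div_of_le_mul_toReal_inv_mul hC.le hgauss (hT t ht₀ x hxQ y hy).2
      _ ≤ _ := ENNReal.div_le_mul_div_of_le_mul (by simpa using hA) ENNReal.ofReal_ne_top hQ
  calc _ ≤ ∫⁻ _ in Q, ENNReal.ofReal C * ENNReal.ofReal A / μ Q ∂μ := lintegral_mono_ae hsup
    _ = μ Q * (ENNReal.ofReal C * ENNReal.ofReal A / μ Q) := by rw [setLIntegral_const, mul_comm]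
    _ ≤ ENNReal.ofReal C * ENNReal.ofReal A := ENNReal.mul_div_le
    _ = ENNReal.ofReal (C * A) := (ENNReal.ofReal_mul hC.le).symm
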